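/- Every autoregressive max-definable function is a ReLU decoder: let f : ℝ^{n×p} → ℝ^{m×p} be max-definable and autoregressive. Then there exist a finite t ∈ ℕ, multihead ReLU masked attention modules β_1,…,β_t, and one-layer ReLU feed-forward neural networks φ_1,…,φ_t (applied columnwise) such that f = φ_t ∘ β_t ∘ φ_{t−1} ∘ β_{t−1} ∘ ⋯ ∘ φ_1 ∘ β_1. -/

import Mathlib

noncomputable section

open Matrix

/-- The rectified linear unit. -/
def relu (x : ℝ) : ℝ := max x 0

/-- Entrywise ReLU of a matrix. -/
def matRelu {a b : ℕ} (M : Matrix (Fin a) (Fin b) ℝ) : Matrix (Fin a) (Fin b) ℝ :=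
  Matrix.of fun i j => relu (M i j)

/-- The ReLU-activated masked attention module: the score matrix
`(A_K X + B_K)ᵀ (A_Q X + B_Q)` is ReLU'd on its upper-triangular part (`i ≤ j`) and the
strictly lower-triangular entries (`i > j`) are set to `0`, before multiplying by the values. -/
def maskedAttention {n p d m : ℕ}
    (AQ AK : Matrix (Fin d) (Fin n) ℝ) (AV : Matrix (Fin m) (Fin n) ℝ)
    (BQ BK : Matrix (Fin d) (Fin p) ℝ) (BV : Matrix (Fin m) (Fin p) ℝ)
    (X : Matrix (Fin n) (Fin p) ℝ) : Matrix (Fin m) (Fin p) ℝ :=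
  (AV * X + BV) *
    Matrix.of (fun i j : Fin p =>
      if i ≤ j then relu (((AK * X + BK)ᵀ * (AQ * X + BQ)) i j) else 0)

/-- An `h`-headed ReLU masked attention module: `h` masked attention modules stacked
vertically, giving a map `ℝ^{n×p} → ℝ^{hm×p}`. -/
def multiheadMaskedAttention {n p d m h : ℕ}
    (AQ AK : Fin h → Matrix (Fin d) (Fin n) ℝ) (AV : Fin h → Matrix (Fin m) (Fin n) ℝ)
    (BQ BK : Fin h → Matrix (Fin d) (Fin p) ℝ) (BV : Fin h → Matrix (Fin m) (Fin p) ℝ)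
    (X : Matrix (Fin n) (Fin p) ℝ) : Matrix (Fin (h * m)) (Fin p) ℝ :=
  Matrix.of fun i j =>
    maskedAttention (AQ (finProdFinEquiv.symm i).1) (AK (finProdFinEquiv.symm i).1)
      (AV (finProdFinEquiv.symm i).1) (BQ (finProdFinEquiv.symm i).1)
      (BK (finProdFinEquiv.symm i).1) (BV (finProdFinEquiv.symm i).1) X
      (finProdFinEquiv.symm i).2 j

/-- A one-layer ReLU feed-forward neural network `φ(x) = A₂ ReLU(A₁ x + b₁) + b₂`. -/
def oneLayerNN {a b c : ℕ} (A1 : Matrix (Fin b) (Fin a) ℝ) (b1 : Fin b → ℝ)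
    (A2 : Matrix (Fin c) (Fin b) ℝ) (b2 : Fin c → ℝ) (x : Fin a → ℝ) : Fin c → ℝ :=
  A2.mulVec (fun i => relu (A1.mulVec x i + b1 i)) + b2

/-- Apply a map `φ : ℝ^a → ℝ^c` columnwise to a matrix `X ∈ ℝ^{a×p}`. -/
def colwise {a c p : ℕ} (φ : (Fin a → ℝ) → (Fin c → ℝ))
    (X : Matrix (Fin a) (Fin p) ℝ) : Matrix (Fin c) (Fin p) ℝ :=
  Matrix.of fun i j => φ (fun r => X r j) i

/-- A function `g : ℝ^ι → ℝ` is max-definable if it is a finite max of finite mins of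
polynomials. -/
def IsMaxDefinable (ι : Type) [Fintype ι] (g : (ι → ℝ) → ℝ) : Prop :=
  ∃ (m q : ℕ) (ξ : Fin (m + 1) → Fin (q + 1) → MvPolynomial ι ℝ),
    ∀ x, g x = ⨆ i, ⨅ j, MvPolynomial.eval x (ξ i j)

/-- A matrix-valued function is max-definable if each coordinate function, as a function of the
entries of the input matrix, is max-definable. -/
def IsMatrixMaxDefinable {n p m q : ℕ}
    (f : Matrix (Fin n) (Fin p) ℝ → Matrix (Fin m) (Fin q) ℝ) : Prop :=
  ∀ (i : Fin m) (j : Fin q),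
    IsMaxDefinable (Fin n × Fin p) (fun x => f (Matrix.of fun a b => x (a, b)) i j)

/-- A function `f : ℝ^{n×p} → ℝ^{m×p}` is autoregressive if for each `j`, the `j`-th column of
`f(X)` depends only on the first `j` columns of `X`. -/
def Autoregressive {n m p : ℕ}
    (f : Matrix (Fin n) (Fin p) ℝ → Matrix (Fin m) (Fin p) ℝ) : Prop :=
  ∀ (X Y : Matrix (Fin n) (Fin p) ℝ) (j : Fin p),
    (∀ j' : Fin p, j' ≤ j → ∀ i, X i j' = Y i j') → ∀ i, f X i j = f Y i j

/-- A decoder block with one-layer feed-forward network: a multihead ReLU masked attention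
module followed by a one-layer ReLU neural network applied columnwise. -/
def IsDecoderBlock1 {n r p : ℕ}
    (f : Matrix (Fin n) (Fin p) ℝ → Matrix (Fin r) (Fin p) ℝ) : Prop :=
  ∃ (d m h w : ℕ)
    (AQ AK : Fin h → Matrix (Fin d) (Fin n) ℝ) (AV : Fin h → Matrix (Fin m) (Fin n) ℝ)
    (BQ BK : Fin h → Matrix (Fin d) (Fin p) ℝ) (BV : Fin h → Matrix (Fin m) (Fin p) ℝ)
    (A1 : Matrix (Fin w) (Fin (h * m)) ℝ) (c1 : Fin w → ℝ)
    (A2 : Matrix (Fin r) (Fin w) ℝ) (c2 : Fin r → ℝ),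
    f = fun X =>
      colwise (oneLayerNN A1 c1 A2 c2) (multiheadMaskedAttention AQ AK AV BQ BK BV X)

/-- A `t`-layer decoder built of one-layer networks: the composition of `t` decoder blocks
`φ_t ∘ β_t ∘ ⋯ ∘ φ_1 ∘ β_1`. -/
inductive IsDecoder1 {p : ℕ} : ∀ {n r : ℕ}, ℕ →
    (Matrix (Fin n) (Fin p) ℝ → Matrix (Fin r) (Fin p) ℝ) → Prop
  | block {n r : ℕ} (f : Matrix (Fin n) (Fin p) ℝ → Matrix (Fin r) (Fin p) ℝ)
      (hf : IsDecoderBlock1 f) : IsDecoder1 1 f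
  | comp {n s r : ℕ} (t : ℕ) (f : Matrix (Fin n) (Fin p) ℝ → Matrix (Fin s) (Fin p) ℝ)
      (g : Matrix (Fin s) (Fin p) ℝ → Matrix (Fin r) (Fin p) ℝ)
      (hf : IsDecoderBlock1 f) (hg : IsDecoder1 t g) : IsDecoder1 (t + 1) (g ∘ f)


/-!
The feed-forward layers are only used to realise linear maps, through `x = relu x - relu (-x)`.
All nonlinearity comes from ReLU attention heads with a constant query: such a head appends the
prefix sums `∑_{i ≤ j} a i * relu (b i + P j i)` of two linear combinations `a`, `b` of the rows
of the current state, while identity heads carry the whole state along. Subtracting from a prefix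
sum its copy shifted by one position leaves the pointwise row `a j * relu (b j)`; this gives
products, `relu`, `max` and `min`, and positional biases give the entries `X a b` masked by
`b ≤ j`. Hence every max of mins of polynomials in the entries of `X` up to column `j` can be
computed in column `j`. By autoregressivity, column `j` of `f X` is of this form, with polynomials
depending on `j`, and multiplying by position indicators selects the right one in each column.
-/

open Finset

abbrev Mat (a b : ℕ) := Matrix (Fin a) (Fin b) ℝ

lemma relu_sub_relu_neg (x : ℝ) : relu x - relu (-x) = x := by
  rcases le_total x 0 with h | h <;> simp [relu, h]

lemma relu_sub_add_eq_max (x y : ℝ) : relu (x - y) + y = max x y := by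
  rcases le_total x y with h | h <;> simp [relu, h]

lemma sub_relu_sub_eq_min (x y : ℝ) : x - relu (x - y) = min x y := by
  rcases le_total x y with h | h <;> simp [relu, h]

lemma exists_oneLayerNN_eq_mulVec {a c : ℕ} (L : Matrix (Fin c) (Fin a) ℝ) :
    ∃ (b : ℕ) (A1 : Matrix (Fin b) (Fin a) ℝ) (b1 : Fin b → ℝ) (A2 : Matrix (Fin c) (Fin b) ℝ)
      (b2 : Fin c → ℝ), oneLayerNN A1 b1 A2 b2 = L.mulVec := by
  set A1 : Matrix (Fin (a + a)) (Fin a) ℝ :=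
    Fin.append (1 : Matrix (Fin a) (Fin a) ℝ) (-1 : Matrix (Fin a) (Fin a) ℝ)
  refine ⟨a + a, A1, 0, of fun i => Fin.append (L i) (-L i), 0, ?_⟩
  funext x i
  have h1 (k : Fin a) : (A1 *ᵥ x) (Fin.castAdd a k) = x k := by
    change A1 (Fin.castAdd a k) ⬝ᵥ x = x k
    rw [show A1 (Fin.castAdd a k) = (1 : Matrix (Fin a) (Fin a) ℝ) k from Fin.append_left _ _ _]
    exact congrFun (one_mulVec x) k
  have h2 (k : Fin a) : (A1 *ᵥ x) (Fin.natAdd a k) = -x k := by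
    change A1 (Fin.natAdd a k) ⬝ᵥ x = -x k
    rw [show A1 (Fin.natAdd a k) = (-1 : Matrix (Fin a) (Fin a) ℝ) k from Fin.append_right _ _ _]
    exact congrFun (by rw [neg_mulVec, one_mulVec] : (-1 : Matrix (Fin a) (Fin a) ℝ) *ᵥ x = -x) k
  simp only [oneLayerNN, Pi.add_apply, Pi.zero_apply, add_zero]
  rw [mulVec, dotProduct, Fin.sum_univ_add]
  simp only [of_apply, Fin.append_left, Fin.append_right, h1, h2, ← sum_add_distrib]
  refine sum_congr rfl fun k _ => ?_
  simp only [Pi.neg_apply]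
  linear_combination L i k * relu_sub_relu_neg (x k)

/-- A masked ReLU attention head with constant query, value row `a`, key row `b` and positional
key bias `P`: the score of position `i` for the query at position `j` is `b i + P j i`. -/
def maskedHead {p : ℕ} (a b : Fin p → ℝ) (P : Matrix (Fin p) (Fin p) ℝ) (j : Fin p) : ℝ :=
  ∑ i ∈ Iic j, a i * relu (b i + P j i)

lemma maskedHead_zero_one {p : ℕ} (a : Fin p → ℝ) (j : Fin p) : maskedHead a 0 1 j = a j := by
  rw [maskedHead, sum_eq_single_of_mem j (mem_Iic.2 le_rfl)]
  · simp [relu]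
  · intro i _ hij
    simp [one_apply, Ne.symm hij, relu]

def shiftMask (p : ℕ) : Matrix (Fin p) (Fin p) ℝ := of fun j i => if (i : ℕ) + 1 = j then 1 else 0

lemma maskedHead_shiftMask {p : ℕ} (S : Fin p → ℝ) (j : Fin p) :
    maskedHead S 0 (shiftMask p) j = ∑ i ∈ Iic j, if (i : ℕ) + 1 = j then S i else 0 := by
  refine sum_congr rfl fun i _ => ?_
  split_ifs with h <;> simp [shiftMask, h, relu]

lemma maskedHead_sub_shift {p : ℕ} (a b : Fin p → ℝ) (j : Fin p) :
    maskedHead a b 0 j - maskedHead (fun i => maskedHead a b 0 i) 0 (shiftMask p) j =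
      a j * relu (b j) := by
  have hS (i : Fin p) : maskedHead a b 0 i = ∑ k ∈ Iic i, a k * relu (b k) := by
    simp [maskedHead]
  suffices maskedHead (fun i => maskedHead a b 0 i) 0 (shiftMask p) j =
      ∑ k ∈ Iio j, a k * relu (b k) by
    rw [this, hS, Iic_eq_cons_Iio, sum_cons, add_sub_cancel_right]
  rw [maskedHead_shiftMask]
  obtain ⟨_ | k, hk⟩ := j
  · rw [sum_eq_zero, sum_eq_zero] <;> intro i hi
    · simp [Fin.lt_def] at hi
    · simp
  · have hk' : k < p := by omega
    rw [sum_eq_single_of_mem ⟨k, hk'⟩ (by simp [Fin.le_def]), if_pos rfl, hS]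
    · congr 1
      ext i
      simp [Fin.le_def, Fin.lt_def]
    · intro i _ hi
      rw [if_neg]
      exact fun h => hi (Fin.ext (Nat.add_right_cancel h))

lemma maskedAttention_eq_maskedHead {s p : ℕ} (u c : Fin s → ℝ) (v : Fin p → ℝ)
    (P : Matrix (Fin p) (Fin p) ℝ) (Z : Mat s p) (o : Fin 1) (j : Fin p) :
    maskedAttention 0 (of fun _ => c) (of fun _ => u) 1 P (of fun _ => v) Z o j =
      maskedHead (u ᵥ* Z + v) (c ᵥ* Z) P j := by
  rw [maskedAttention, Matrix.zero_mul, zero_add, Matrix.mul_one, maskedHead, mul_apply]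
  simp only [of_apply, mul_ite, mul_zero]
  rw [← sum_filter, filter_ge_eq_Iic]
  simp [mul_apply, vecMul, dotProduct]

def attentionHeads {s p h : ℕ} (u c : Fin h → Fin s → ℝ) (v : Fin h → Fin p → ℝ)
    (P : Fin h → Matrix (Fin p) (Fin p) ℝ) (Z : Mat s p) : Mat h p :=
  of fun t j => maskedHead (u t ᵥ* Z + v t) (c t ᵥ* Z) (P t) j

lemma isDecoderBlock1_mul_attentionHeads {s p h r : ℕ} (L : Matrix (Fin r) (Fin h) ℝ)
    (u c : Fin h → Fin s → ℝ) (v : Fin h → Fin p → ℝ) (P : Fin h → Matrix (Fin p) (Fin p) ℝ) :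
    IsDecoderBlock1 (fun Z : Mat s p => L * attentionHeads u c v P Z) := by
  obtain ⟨w, A1, b1, A2, b2, hNN⟩ := exists_oneLayerNN_eq_mulVec
    (of fun i q => L i (finProdFinEquiv.symm q).1 : Matrix (Fin r) (Fin (h * 1)) ℝ)
  refine ⟨p, 1, h, w, fun _ => 0, fun t => of fun _ => c t, fun t => of fun _ => u t,
    fun _ => 1, P, fun t => of fun _ => v t, A1, b1, A2, b2, ?_⟩
  funext Z
  ext i j
  simp only [colwise, of_apply, hNN, multiheadMaskedAttention, maskedAttention_eq_maskedHead,
    mulVec, dotProduct, attentionHeads, mul_apply]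
  rw [← finProdFinEquiv.sum_comp, Fintype.sum_prod_type]
  simp

lemma attentionHeads_single {s p : ℕ} (Z : Mat s p) :
    attentionHeads (fun k => Pi.single k 1) 0 0 (fun _ => 1) Z = Z := by
  ext k j
  simp [attentionHeads, maskedHead_zero_one]

lemma IsDecoder1.comp_block {p a r t : ℕ} {g : Mat a p → Mat r p} (hg : IsDecoder1 t g)
    {r' : ℕ} {b : Mat r p → Mat r' p} (hb : IsDecoderBlock1 b) :
    IsDecoder1 (t + 1) (b ∘ g) := by
  induction hg generalizing r' with
  | block f hf => exact .comp 1 f b hf (.block b hb)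
  | comp t f g hf _ ih => exact .comp (t + 1) f (b ∘ g) hf (ih hb)

section State

variable {n p : ℕ}

def IsDecoder {s : ℕ} (G : Mat n p → Mat s p) : Prop := ∃ t, IsDecoder1 t G

def IsLinearIn {s : ℕ} (G : Mat n p → Mat s p) (r : Mat n p → Fin p → ℝ) : Prop :=
  ∃ c : Fin s → ℝ, ∀ X, r X = c ᵥ* G X

def Extends {s s' : ℕ} (G : Mat n p → Mat s p) (G' : Mat n p → Mat s' p) : Prop :=
  ∀ k, IsLinearIn G' (fun X => G X k)

lemma IsDecoder.comp_block {s r : ℕ} {G : Mat n p → Mat s p} (hG : IsDecoder G)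
    {b : Mat s p → Mat r p} (hb : IsDecoderBlock1 b) : IsDecoder (b ∘ G) :=
  let ⟨t, ht⟩ := hG; ⟨t + 1, ht.comp_block hb⟩

lemma isDecoder_id : IsDecoder (fun X : Mat n p => X) := by
  refine ⟨1, .block _ ?_⟩
  simpa [attentionHeads_single] using
    isDecoderBlock1_mul_attentionHeads (1 : Matrix (Fin n) (Fin n) ℝ) (fun k => Pi.single k 1)
      0 0 (fun _ => (1 : Matrix (Fin p) (Fin p) ℝ))

lemma IsDecoder.mul_left {s r : ℕ} {G : Mat n p → Mat s p} (hG : IsDecoder G)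
    (L : Matrix (Fin r) (Fin s) ℝ) : IsDecoder (fun X => L * G X) := by
  simpa [Function.comp_def, attentionHeads_single] using
    hG.comp_block (isDecoderBlock1_mul_attentionHeads L (fun k => Pi.single k 1) 0 0
      (fun _ => (1 : Matrix (Fin p) (Fin p) ℝ)))

lemma IsDecoder.of_isLinearIn {s r : ℕ} {G : Mat n p → Mat s p} (hG : IsDecoder G)
    {G' : Mat n p → Mat r p} (h : ∀ i, IsLinearIn G (fun X => G' X i)) : IsDecoder G' := by
  choose c hc using h
  have hc : ∀ i X, G' X i = c i ᵥ* G X := hc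
  convert hG.mul_left (of c) using 1
  funext X
  ext i j
  rw [hc i X]
  simp [mul_apply, vecMul, dotProduct]

lemma IsDecoder.cons_maskedHead {s : ℕ} {G : Mat n p → Mat s p} (hG : IsDecoder G)
    {a b : Mat n p → Fin p → ℝ} (ha : IsLinearIn G a) (hb : IsLinearIn G b) (v : Fin p → ℝ)
    (P : Matrix (Fin p) (Fin p) ℝ) :
    IsDecoder (fun X =>
      of (Fin.cons (maskedHead (a X + v) (b X) P) (G X) : Fin (s + 1) → Fin p → ℝ)) := by
  obtain ⟨ca, hca⟩ := ha
  obtain ⟨cb, hcb⟩ := hb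
  convert hG.comp_block (isDecoderBlock1_mul_attentionHeads (1 : Matrix (Fin (s + 1)) _ ℝ)
    (Fin.cons ca fun k => Pi.single k 1) (Fin.cons cb 0) (Fin.cons v 0)
    (Fin.cons P fun _ => 1)) using 1
  funext X
  ext i j
  refine Fin.cases ?_ (fun k => ?_) i
  · simp only [hca, hcb, of_apply, attentionHeads, Matrix.one_mul, Function.comp_apply,
      Fin.cons_zero]
    rfl
  · simp only [of_apply, attentionHeads, Matrix.one_mul, Function.comp_apply, Fin.cons_succ,
      single_one_vecMul, row_apply, Pi.zero_apply, add_zero, zero_vecMul, maskedHead_zero_one]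
    rfl

lemma isLinearIn_row {s : ℕ} (G : Mat n p → Mat s p) (k : Fin s) :
    IsLinearIn G (fun X => G X k) :=
  ⟨Pi.single k 1, fun X => (single_one_vecMul k (G X)).symm⟩

lemma isLinearIn_zero {s : ℕ} (G : Mat n p → Mat s p) : IsLinearIn G (fun _ => (0 : Fin p → ℝ)) :=
  ⟨0, fun X => (zero_vecMul (G X)).symm⟩

lemma isLinearIn_cons {s : ℕ} (G : Mat n p → Mat s p) (r : Mat n p → Fin p → ℝ) :
    IsLinearIn (fun X => of (Fin.cons (r X) (G X) : Fin (s + 1) → Fin p → ℝ)) r :=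
  isLinearIn_row _ 0

lemma IsLinearIn.add {s : ℕ} {G : Mat n p → Mat s p} {a b : Mat n p → Fin p → ℝ}
    (ha : IsLinearIn G a) (hb : IsLinearIn G b) : IsLinearIn G (fun X => a X + b X) :=
  let ⟨c, hc⟩ := ha; let ⟨d, hd⟩ := hb; ⟨c + d, fun X => by simp only [hc, hd, add_vecMul]⟩

lemma IsLinearIn.sub {s : ℕ} {G : Mat n p → Mat s p} {a b : Mat n p → Fin p → ℝ}
    (ha : IsLinearIn G a) (hb : IsLinearIn G b) : IsLinearIn G (fun X => a X - b X) :=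
  let ⟨c, hc⟩ := ha; let ⟨d, hd⟩ := hb; ⟨c - d, fun X => by simp only [hc, hd, sub_vecMul]⟩

lemma IsLinearIn.of_extends {s s' : ℕ} {G : Mat n p → Mat s p} {G' : Mat n p → Mat s' p}
    {a : Mat n p → Fin p → ℝ} (ha : IsLinearIn G a) (hGG' : Extends G G') : IsLinearIn G' a := by
  obtain ⟨c, hc⟩ := ha
  choose d hd using hGG'
  have hd : ∀ k X, G X k = d k ᵥ* G' X := hd
  refine ⟨c ᵥ* of d, fun X => ?_⟩
  rw [vecMul_vecMul, hc]
  congr 1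
  ext k j
  rw [hd k X]
  simp [mul_apply, vecMul, dotProduct]

lemma Extends.refl {s : ℕ} (G : Mat n p → Mat s p) : Extends G G := isLinearIn_row G

lemma Extends.trans {s s' s'' : ℕ} {G : Mat n p → Mat s p} {G' : Mat n p → Mat s' p}
    {G'' : Mat n p → Mat s'' p} (h : Extends G G') (h' : Extends G' G'') : Extends G G'' :=
  fun k => (h k).of_extends h'

lemma extends_cons {s : ℕ} (G : Mat n p → Mat s p) (r : Mat n p → Fin p → ℝ) :
    Extends G (fun X => of (Fin.cons (r X) (G X) : Fin (s + 1) → Fin p → ℝ)) :=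
  fun k => isLinearIn_row _ k.succ

end State

section Computable

variable {n p : ℕ}

/-- Keeping the input among the rows of the state makes this notion composable: the extension
`G'` again satisfies the hypothesis imposed on `G`. -/
def DecoderComputable (r : Mat n p → Fin p → ℝ) : Prop :=
  ∀ (s : ℕ) (G : Mat n p → Mat s p), IsDecoder G → Extends (fun X => X) G →
    ∃ (s' : ℕ) (G' : Mat n p → Mat s' p), IsDecoder G' ∧ Extends G G' ∧ IsLinearIn G' r

lemma DecoderComputable.congr {r r' : Mat n p → Fin p → ℝ} (h : DecoderComputable r)
    (h' : ∀ X j, r X j = r' X j) : DecoderComputable r' :=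
  funext (fun X => funext (h' X)) ▸ h

lemma DecoderComputable.map₂ {a b r : Mat n p → Fin p → ℝ} (ha : DecoderComputable a)
    (hb : DecoderComputable b)
    (h : ∀ (s : ℕ) (G : Mat n p → Mat s p), IsDecoder G → IsLinearIn G a → IsLinearIn G b →
      ∃ (s' : ℕ) (G' : Mat n p → Mat s' p), IsDecoder G' ∧ Extends G G' ∧ IsLinearIn G' r) :
    DecoderComputable r := by
  intro s G hG hin
  obtain ⟨s₁, G₁, hG₁, hGG₁, ha₁⟩ := ha s G hG hin
  obtain ⟨s₂, G₂, hG₂, hG₁G₂, hb₂⟩ := hb s₁ G₁ hG₁ (hin.trans hGG₁)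
  obtain ⟨s₃, G₃, hG₃, hG₂G₃, hr⟩ := h s₂ G₂ hG₂ (ha₁.of_extends hG₁G₂) hb₂
  exact ⟨s₃, G₃, hG₃, hGG₁.trans (hG₁G₂.trans hG₂G₃), hr⟩

lemma decoderComputable_input (a : Fin n) : DecoderComputable (fun X : Mat n p => X a) :=
  fun s G hG hin => ⟨s, G, hG, .refl G, hin a⟩

lemma decoderComputable_zero : DecoderComputable (fun (_ : Mat n p) => (0 : Fin p → ℝ)) :=
  fun s G hG _ => ⟨s, G, hG, .refl G, isLinearIn_zero G⟩

lemma DecoderComputable.add {a b : Mat n p → Fin p → ℝ} (ha : DecoderComputable a)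
    (hb : DecoderComputable b) : DecoderComputable (fun X j => a X j + b X j) :=
  ha.map₂ hb fun s G hG ha hb => ⟨s, G, hG, .refl G, ha.add hb⟩

lemma DecoderComputable.sub {a b : Mat n p → Fin p → ℝ} (ha : DecoderComputable a)
    (hb : DecoderComputable b) : DecoderComputable (fun X j => a X j - b X j) :=
  ha.map₂ hb fun s G hG ha hb => ⟨s, G, hG, .refl G, ha.sub hb⟩

lemma DecoderComputable.maskedHead {a b : Mat n p → Fin p → ℝ} (ha : DecoderComputable a)
    (hb : DecoderComputable b) (v : Fin p → ℝ) (P : Matrix (Fin p) (Fin p) ℝ) :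
    DecoderComputable (fun X => maskedHead (a X + v) (b X) P) :=
  ha.map₂ hb fun s G hG ha hb =>
    ⟨s + 1, _, hG.cons_maskedHead ha hb v P, extends_cons G _, isLinearIn_cons G _⟩

lemma decoderComputable_const (v : Fin p → ℝ) : DecoderComputable (fun (_ : Mat n p) => v) :=
  (decoderComputable_zero.maskedHead decoderComputable_zero v 1).congr fun X j => by
    simp [maskedHead_zero_one]

lemma DecoderComputable.mul_relu {a b : Mat n p → Fin p → ℝ} (ha : DecoderComputable a)
    (hb : DecoderComputable b) : DecoderComputable (fun X j => a X j * relu (b X j)) := by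
  have hS := ha.maskedHead hb 0 0
  refine (hS.sub (hS.maskedHead decoderComputable_zero 0 (shiftMask p))).congr fun X j => ?_
  simpa only [add_zero] using maskedHead_sub_shift (a X) (b X) j

lemma DecoderComputable.relu {a : Mat n p → Fin p → ℝ} (ha : DecoderComputable a) :
    DecoderComputable (fun X j => relu (a X j)) :=
  ((decoderComputable_const 1).mul_relu ha).congr fun _ _ => one_mul _

lemma DecoderComputable.mul {a b : Mat n p → Fin p → ℝ} (ha : DecoderComputable a)
    (hb : DecoderComputable b) : DecoderComputable (fun X j => a X j * b X j) := by
  refine ((ha.mul_relu hb).sub (ha.mul_relu (decoderComputable_zero.sub hb))).congr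
    fun X j => ?_
  simp only [Pi.zero_apply, zero_sub]
  linear_combination a X j * relu_sub_relu_neg (b X j)

lemma DecoderComputable.max {a b : Mat n p → Fin p → ℝ} (ha : DecoderComputable a)
    (hb : DecoderComputable b) : DecoderComputable (fun X j => max (a X j) (b X j)) :=
  ((ha.sub hb).relu.add hb).congr fun X j => relu_sub_add_eq_max (a X j) (b X j)

lemma DecoderComputable.min {a b : Mat n p → Fin p → ℝ} (ha : DecoderComputable a)
    (hb : DecoderComputable b) : DecoderComputable (fun X j => min (a X j) (b X j)) :=
  (ha.sub (ha.sub hb).relu).congr fun X j => sub_relu_sub_eq_min (a X j) (b X j)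

lemma DecoderComputable.sum {ι : Type*} (s : Finset ι) {F : ι → Mat n p → Fin p → ℝ}
    (hF : ∀ i ∈ s, DecoderComputable (F i)) :
    DecoderComputable (fun X j => ∑ i ∈ s, F i X j) := by
  classical
  induction s using Finset.induction_on with
  | empty => exact decoderComputable_zero.congr fun _ _ => by simp
  | insert i s hi ih =>
    simpa [sum_insert hi] using
      (hF i (mem_insert_self i s)).add (ih fun k hk => hF k (mem_insert_of_mem hk))

lemma DecoderComputable.sup' {ι : Type*} {s : Finset ι} (hs : s.Nonempty)
    {F : ι → Mat n p → Fin p → ℝ} (hF : ∀ i ∈ s, DecoderComputable (F i)) :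
    DecoderComputable (fun X j => s.sup' hs (fun i => F i X j)) := by
  induction hs using Finset.Nonempty.cons_induction with
  | singleton i => simpa using hF i (mem_singleton_self i)
  | cons i s hi hs ih =>
    simpa [sup'_cons hs] using
      (hF i (mem_cons_self i s)).max (ih fun k hk => hF k (mem_cons_of_mem hk))

lemma DecoderComputable.inf' {ι : Type*} {s : Finset ι} (hs : s.Nonempty)
    {F : ι → Mat n p → Fin p → ℝ} (hF : ∀ i ∈ s, DecoderComputable (F i)) :
    DecoderComputable (fun X j => s.inf' hs (fun i => F i X j)) := by
  induction hs using Finset.Nonempty.cons_induction with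
  | singleton i => simpa using hF i (mem_singleton_self i)
  | cons i s hi hs ih =>
    simpa [inf'_cons hs] using
      (hF i (mem_cons_self i s)).min (ih fun k hk => hF k (mem_cons_of_mem hk))

lemma DecoderComputable.iSup {ι : Type*} [Fintype ι] [Nonempty ι]
    {F : ι → Mat n p → Fin p → ℝ} (hF : ∀ i, DecoderComputable (F i)) :
    DecoderComputable (fun X j => ⨆ i, F i X j) :=
  (DecoderComputable.sup' univ_nonempty fun i _ => hF i).congr fun _ _ => sup'_univ_eq_ciSup _

lemma DecoderComputable.iInf {ι : Type*} [Fintype ι] [Nonempty ι]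
    {F : ι → Mat n p → Fin p → ℝ} (hF : ∀ i, DecoderComputable (F i)) :
    DecoderComputable (fun X j => ⨅ i, F i X j) :=
  (DecoderComputable.inf' univ_nonempty fun i _ => hF i).congr fun _ _ => inf'_univ_eq_ciInf _

lemma DecoderComputable.diag {F : Fin p → Mat n p → Fin p → ℝ}
    (hF : ∀ k, DecoderComputable (F k)) : DecoderComputable (fun X j => F j X j) := by
  refine (DecoderComputable.sum univ fun k _ =>
    (decoderComputable_const (fun j => if k = j then 1 else 0)).mul (hF k)).congr fun X j => ?_
  simp

def truncatedEntries (X : Mat n p) (j : Fin p) : Fin n × Fin p → ℝ :=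
  fun e => if e.2 ≤ j then X e.1 e.2 else 0

lemma decoderComputable_truncatedEntries (e : Fin n × Fin p) :
    DecoderComputable (fun X j => truncatedEntries X j e) := by
  refine ((decoderComputable_input e.1).maskedHead decoderComputable_zero 0
    (of fun _ i => if i = e.2 then 1 else 0)).congr fun X j => ?_
  have (i : Fin p) : X e.1 i * relu (if i = e.2 then 1 else 0) =
      if i = e.2 then X e.1 e.2 else 0 := by
    split_ifs with h <;> simp [h, relu]
  simp [maskedHead, this, truncatedEntries]

lemma decoderComputable_eval (q : MvPolynomial (Fin n × Fin p) ℝ) :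
    DecoderComputable (fun X j => MvPolynomial.eval (truncatedEntries X j) q) := by
  induction q using MvPolynomial.induction_on with
  | C r => simpa using decoderComputable_const (n := n) (fun _ : Fin p => r)
  | add q₁ q₂ h₁ h₂ => simpa using h₁.add h₂
  | mul_X q e h => simpa using h.mul (decoderComputable_truncatedEntries e)

lemma exists_isDecoder_isLinearIn :
    ∀ {r : ℕ} {R : Fin r → Mat n p → Fin p → ℝ}, (∀ i, DecoderComputable (R i)) →
      ∃ (s : ℕ) (G : Mat n p → Mat s p), IsDecoder G ∧ Extends (fun X => X) G ∧
        ∀ i, IsLinearIn G (R i)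
  | 0, _, _ => ⟨n, fun X => X, isDecoder_id, .refl _, fun i => i.elim0⟩
  | r + 1, R, hR => by
    obtain ⟨s, G, hG, hin, hRG⟩ := exists_isDecoder_isLinearIn fun i => hR (Fin.castSucc i)
    obtain ⟨s', G', hG', hGG', hlast⟩ := hR (Fin.last r) s G hG hin
    exact ⟨s', G', hG', hin.trans hGG', Fin.lastCases hlast fun i => (hRG i).of_extends hGG'⟩

end Computable

lemma Autoregressive.decoderComputable_row {n m p : ℕ}
    {f : Matrix (Fin n) (Fin p) ℝ → Matrix (Fin m) (Fin p) ℝ} (haf : Autoregressive f)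
    (hf : IsMatrixMaxDefinable f) (i : Fin m) : DecoderComputable (fun X => f X i) := by
  choose mm qq ξ hξ using hf i
  refine (DecoderComputable.diag fun k => DecoderComputable.iSup fun a =>
    DecoderComputable.iInf fun b => decoderComputable_eval (ξ k a b)).congr fun X j => ?_
  rw [← hξ j]
  exact haf _ X j (fun k hk a => by simp [truncatedEntries, hk]) i

/-- Every autoregressive max-definable function `f : ℝ^{n×p} → ℝ^{m×p}` is a ReLU decoder: for
some finite `t` there are multihead ReLU masked attention modules `β_1, …, β_t` and one-layer
ReLU feed-forward neural networks `φ_1, …, φ_t` (applied columnwise) with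
`f = φ_t ∘ β_t ∘ ⋯ ∘ φ_1 ∘ β_1`. -/
theorem autoregressive_maxDefinable_is_decoder (n p m : ℕ)
    (f : Matrix (Fin n) (Fin p) ℝ → Matrix (Fin m) (Fin p) ℝ)
    (hf : IsMatrixMaxDefinable f) (haf : Autoregressive f) :
    ∃ t : ℕ, IsDecoder1 t f := by
  obtain ⟨s, G, hG, -, hfG⟩ := exists_isDecoder_isLinearIn (haf.decoderComputable_row hf)
  exact hG.of_isLinearIn hfG
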